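/- arXiv:0904.0994 — 6 statements merged into one kernel-verified Lean document; each statement's English description precedes it below -/
import Mathlib

section
/- If for all w in the null space of A we have ||x_K + w_K||_1 + (1/C)||w_{K̄}||_1 ≥ ||x_K||_1, then for any solution x̂ of the ℓ1 minimization problem (i.e., Ax̂ = Ax and ||x̂||_1 ≤ ||x||_1), it holds that ||(x - x̂)_{K̄}||_1 ≤ (2C/(C-1))||x_{K̄}||_1. -/
/-!
Put `w = x̂ - x`, which lies in the null space. The hypothesis says that `x̂` loses at most
`‖w_K̄‖₁ / C` of the mass of `x` on `K`; since `‖x̂‖₁ ≤ ‖x‖₁`, it can gain at most that much on `K̄`,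
so `‖x̂_K̄‖₁ ≤ ‖x_K̄‖₁ + ‖w_K̄‖₁ / C`. The triangle inequality then gives
`‖w_K̄‖₁ ≤ 2 ‖x_K̄‖₁ + ‖w_K̄‖₁ / C`, and `C > 1` lets us solve for `‖w_K̄‖₁`.
-/

open Finset

theorem sum_abs_sub_le_sum_abs_add_sum_abs {ι : Type*} (s : Finset ι) (x y : ι → ℝ) :
    ∑ i ∈ s, |x i - y i| ≤ ∑ i ∈ s, |x i| + ∑ i ∈ s, |y i| := by
  rw [← sum_add_distrib]
  exact sum_le_sum fun i _ => abs_sub (x i) (y i)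

theorem sum_abs_compl_sub_le {ι : Type*} [Fintype ι] [DecidableEq ι] {K : Finset ι} {C : ℝ}
    (hC : 1 < C) {x y : ι → ℝ}
    (hK : ∑ i ∈ K, |x i| ≤ ∑ i ∈ K, |y i| + (1 / C) * ∑ i ∈ Kᶜ, |x i - y i|)
    (hl1 : ∑ i, |y i| ≤ ∑ i, |x i|) :
    ∑ i ∈ Kᶜ, |x i - y i| ≤ (2 * C / (C - 1)) * ∑ i ∈ Kᶜ, |x i| := by
  set err := ∑ i ∈ Kᶜ, |x i - y i|
  rw [← sum_add_sum_compl K, ← sum_add_sum_compl K (fun i => |x i|)] at hl1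
  have htail : ∑ i ∈ Kᶜ, |y i| ≤ ∑ i ∈ Kᶜ, |x i| + (1 / C) * err := by linarith
  have herr : err ≤ 2 * ∑ i ∈ Kᶜ, |x i| + (1 / C) * err := by
    linarith [sum_abs_sub_le_sum_abs_add_sum_abs Kᶜ x y]
  have hC₀ : 0 < C := by linarith
  rw [div_mul_eq_mul_div, le_div_iff₀ (by linarith)]
  calc err * (C - 1) = C * (err - (1 / C) * err) := by field_simp
    _ ≤ 2 * C * ∑ i ∈ Kᶜ, |x i| := by nlinarith

theorem stmt_0 {m n : ℕ} (A : Matrix (Fin m) (Fin n) ℝ) (x : Fin n → ℝ)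
    (K : Finset (Fin n)) (C : ℝ) (hC : 1 < C)
    (hns : ∀ w : Fin n → ℝ, A.mulVec w = 0 →
      ∑ i ∈ K, |x i + w i| + (1 / C) * ∑ i ∈ Kᶜ, |w i| ≥ ∑ i ∈ K, |x i|)
    (xh : Fin n → ℝ) (hAx : A.mulVec xh = A.mulVec x)
    (hl1 : ∑ i, |xh i| ≤ ∑ i, |x i|) :
    ∑ i ∈ Kᶜ, |x i - xh i| ≤ (2 * C / (C - 1)) * ∑ i ∈ Kᶜ, |x i| := by
  have hker : A.mulVec (xh - x) = 0 := by rw [Matrix.mulVec_sub, hAx, sub_self]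
  have hK := hns (xh - x) hker
  simp only [Pi.sub_apply, add_sub_cancel, abs_sub_comm (xh _)] at hK
  exact sum_abs_compl_sub_le hC hK hl1
end

section
/- If for all w in the null space of A we have ||x_K + w_K||_1 + (1/C)||w_{K̄}||_1 ≥ ||x_K||_1, then for any solution x̂ of the ℓ1 minimization problem (Ax̂ = Ax and ||x̂||_1 ≤ ||x||_1), it holds that ||x_K||_1 - ||x̂_K||_1 ≤ (2/(C-1))||x_{K̄}||_1. -/
open Finset

theorem stmt_1 {m n : ℕ} (A : Matrix (Fin m) (Fin n) ℝ) (x : Fin n → ℝ)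
    (K : Finset (Fin n)) (C : ℝ) (hC : 1 < C)
    (hns : ∀ w : Fin n → ℝ, A.mulVec w = 0 →
      ∑ i ∈ K, |x i + w i| + (1 / C) * ∑ i ∈ Kᶜ, |w i| ≥ ∑ i ∈ K, |x i|)
    (xh : Fin n → ℝ) (hAx : A.mulVec xh = A.mulVec x)
    (hl1 : ∑ i, |xh i| ≤ ∑ i, |x i|) :
    ∑ i ∈ K, |x i| - ∑ i ∈ K, |xh i| ≤ (2 / (C - 1)) * ∑ i ∈ Kᶜ, |x i| := by
  have hw := hns (xh - x) (by rw [Matrix.mulVec_sub, hAx, sub_self])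
  simp only [Pi.sub_apply, add_sub_cancel] at hw
  have htri : ∑ i ∈ Kᶜ, |xh i - x i| ≤ ∑ i ∈ Kᶜ, |xh i| + ∑ i ∈ Kᶜ, |x i| := by
    rw [← Finset.sum_add_distrib]
    exact Finset.sum_le_sum fun i _ => abs_sub _ _
  have hsplitx : ∑ i ∈ K, |x i| + ∑ i ∈ Kᶜ, |x i| = ∑ i, |x i| :=
    Finset.sum_add_sum_compl K _
  have hsplitxh : ∑ i ∈ K, |xh i| + ∑ i ∈ Kᶜ, |xh i| = ∑ i, |xh i| :=
    Finset.sum_add_sum_compl K _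
  have hC0 : (0:ℝ) < C := by linarith
  have hC1 : (0:ℝ) < C - 1 := by linarith
  have hcc : C * (1 / C) = 1 := mul_one_div_cancel (ne_of_gt hC0)
  have h0 : ∑ i ∈ K, |x i| - ∑ i ∈ K, |xh i| ≤ 1 / C * ∑ i ∈ Kᶜ, |xh i - x i| := by
    linarith [hw]
  have h1 : C * (∑ i ∈ K, |x i| - ∑ i ∈ K, |xh i|) ≤ ∑ i ∈ Kᶜ, |xh i - x i| :=
    calc C * (∑ i ∈ K, |x i| - ∑ i ∈ K, |xh i|)
        ≤ C * (1 / C * ∑ i ∈ Kᶜ, |xh i - x i|) := mul_le_mul_of_nonneg_left h0 hC0.le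
      _ = ∑ i ∈ Kᶜ, |xh i - x i| := by field_simp
  rw [div_mul_eq_mul_div, le_div_iff₀ hC1]
  nlinarith
end

section
/- Suppose every w in the null space of A with ||w_K||_1 ≤ κ ||w_{K̄}||_1 and for all w in null(A), ||x_K + w_K||_1 + (1/C)||w_{K̄}||_1 ≥ ||x_K||_1. If x̂ satisfies Ax̂ = Ax and ||x̂||_1 ≤ ||x||_1, then ||(x - x̂)_K||_1 ≤ κ·(2C/(C-1))||x_{K̄}||_1. -/
open Finset

theorem stmt_4 {m n : ℕ} (A : Matrix (Fin m) (Fin n) ℝ) (x : Fin n → ℝ)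
    (K : Finset (Fin n)) (C κ : ℝ) (hC : 1 < C) (hκ : 0 ≤ κ)
    (hker : ∀ w : Fin n → ℝ, A.mulVec w = 0 →
      ∑ i ∈ K, |w i| ≤ κ * ∑ i ∈ Kᶜ, |w i|)
    (hns : ∀ w : Fin n → ℝ, A.mulVec w = 0 →
      ∑ i ∈ K, |x i + w i| + (1 / C) * ∑ i ∈ Kᶜ, |w i| ≥ ∑ i ∈ K, |x i|)
    (xh : Fin n → ℝ) (hAx : A.mulVec xh = A.mulVec x)
    (hl1 : ∑ i, |xh i| ≤ ∑ i, |x i|) :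
    ∑ i ∈ K, |x i - xh i| ≤ κ * ((2 * C / (C - 1)) * ∑ i ∈ Kᶜ, |x i|) := by
  set w : Fin n → ℝ := fun i => xh i - x i with hw
  have hAw : A.mulVec w = 0 := by
    have : w = xh - x := rfl
    rw [this, Matrix.mulVec_sub, hAx, sub_self]
  have h1 := hker w hAw
  have h2 := hns w hAw
  have hpos : 0 < C := lt_trans one_pos hC
  -- bound ∑_{Kᶜ} |w| ≤ (2C/(C-1)) ∑_{Kᶜ} |x|
  have hsplit1 : ∑ i ∈ K, |xh i| + ∑ i ∈ Kᶜ, |xh i| = ∑ i, |xh i| :=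
    Finset.sum_add_sum_compl K _
  have hsplit2 : ∑ i ∈ K, |x i| + ∑ i ∈ Kᶜ, |x i| = ∑ i, |x i| :=
    Finset.sum_add_sum_compl K _
  have hKh : ∀ i, |xh i| = |x i + w i| := by
    intro i; simp [hw]
  have hKch : ∀ i ∈ Kᶜ, |w i| - |x i| ≤ |xh i| := by
    intro i _
    have : |xh i - x i| ≤ |xh i| + |x i| := by
      simpa [sub_eq_add_neg] using abs_add_le (xh i) (-(x i))
    simp only [hw]
    linarith
  have hsum3 : ∑ i ∈ Kᶜ, |w i| - ∑ i ∈ Kᶜ, |x i| ≤ ∑ i ∈ Kᶜ, |xh i| := by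
    rw [← Finset.sum_sub_distrib]
    exact Finset.sum_le_sum hKch
  have hsum4 : ∑ i ∈ K, |x i| - (1 / C) * ∑ i ∈ Kᶜ, |w i| ≤ ∑ i ∈ K, |xh i| := by
    have : ∑ i ∈ K, |xh i| = ∑ i ∈ K, |x i + w i| := by
      exact Finset.sum_congr rfl fun i _ => hKh i
    linarith [h2]
  have hbound : ∑ i ∈ Kᶜ, |w i| ≤ 2 * C / (C - 1) * ∑ i ∈ Kᶜ, |x i| := by
    have hC1 : 0 < C - 1 := by linarith
    have key0 : ∑ i ∈ Kᶜ, |w i| ≤ 2 * ∑ i ∈ Kᶜ, |x i| + (1 / C) * ∑ i ∈ Kᶜ, |w i| := by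
      linarith
    have hCu : C * ((1 / C) * ∑ i ∈ Kᶜ, |w i|) = ∑ i ∈ Kᶜ, |w i| := by
      field_simp
    have key : (C - 1) * ∑ i ∈ Kᶜ, |w i| ≤ 2 * C * ∑ i ∈ Kᶜ, |x i| := by
      nlinarith [mul_le_mul_of_nonneg_left key0 hpos.le]
    calc ∑ i ∈ Kᶜ, |w i| = ((C - 1) * ∑ i ∈ Kᶜ, |w i|) / (C - 1) := by
          field_simp
      _ ≤ (2 * C * ∑ i ∈ Kᶜ, |x i|) / (C - 1) := by
          gcongr
      _ = 2 * C / (C - 1) * ∑ i ∈ Kᶜ, |x i| := by ring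
  have heq : ∑ i ∈ K, |x i - xh i| = ∑ i ∈ K, |w i| := by
    refine Finset.sum_congr rfl fun i _ => ?_
    rw [hw]; rw [abs_sub_comm]
  rw [heq]
  calc ∑ i ∈ K, |w i| ≤ κ * ∑ i ∈ Kᶜ, |w i| := h1
    _ ≤ κ * (2 * C / (C - 1) * ∑ i ∈ Kᶜ, |x i|) := by
        exact mul_le_mul_of_nonneg_left hbound hκ
end

section
/- Let x, x̂ ∈ ℝⁿ, K ⊆ {1,...,n} with |K| = k, such that |x_i| ≥ a₁ for all i ∈ K, ||(x - x̂)_{K̄}||_1 ≤ D₁, and ||(x - x̂)_K||_1 ≤ D₂. Let K' be any set of k indices corresponding to the k largest entries of x̂ in absolute value. Then the number of indices in K' at which x is zero is at most (2/a₁)(D₁ + D₂). -/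
open Finset

theorem stmt_7 {n : ℕ} (x xh : Fin n → ℝ) (K K' : Finset (Fin n)) (k : ℕ)
    (a₁ D₁ D₂ : ℝ) (ha₁ : 0 < a₁) (hD₁ : 0 ≤ D₁) (hD₂ : 0 ≤ D₂)
    (hK : K.card = k) (hK' : K'.card = k)
    (hbig : ∀ i ∈ K, a₁ ≤ |x i|)
    (herr1 : ∑ i ∈ Kᶜ, |x i - xh i| ≤ D₁)
    (herr2 : ∑ i ∈ K, |x i - xh i| ≤ D₂)
    (htop : ∀ i ∈ K', ∀ j ∉ K', |xh j| ≤ |xh i|) :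
    ((K'.filter (fun i => x i = 0)).card : ℝ) ≤ (2 / a₁) * (D₁ + D₂) := by
  classical
  set Z := K'.filter (fun i => x i = 0) with hZ
  have hZnotK : ∀ i ∈ Z, i ∉ K := by
    intro i hi hiK
    have h0 : x i = 0 := (mem_filter.mp hi).2
    have := hbig i hiK
    rw [h0, abs_zero] at this
    linarith
  set Z1 := Z.filter (fun i => a₁ / 2 ≤ |xh i|) with hZ1
  set Z2 := Z.filter (fun i => ¬ a₁ / 2 ≤ |xh i|) with hZ2
  have hcard : Z1.card + Z2.card = Z.card := card_filter_add_card_filter_not _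
  -- Bound for Z1
  have hZ1sub : Z1 ⊆ Kᶜ := by
    intro i hi
    simp only [mem_compl]
    exact hZnotK i (mem_filter.mp hi).1
  have hb1 : (Z1.card : ℝ) * (a₁ / 2) ≤ D₁ := by
    have h1 : (Z1.card : ℝ) * (a₁ / 2) ≤ ∑ i ∈ Z1, |x i - xh i| := by
      rw [show (Z1.card : ℝ) * (a₁ / 2) = ∑ _i ∈ Z1, a₁ / 2 by
        rw [Finset.sum_const, nsmul_eq_mul]]
      apply Finset.sum_le_sum
      intro i hi
      have hx0 : x i = 0 := (mem_filter.mp (mem_filter.mp hi).1).2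
      have habs : a₁ / 2 ≤ |xh i| := (mem_filter.mp hi).2
      rw [hx0, zero_sub, abs_neg]
      exact habs
    have h2 : ∑ i ∈ Z1, |x i - xh i| ≤ ∑ i ∈ Kᶜ, |x i - xh i| :=
      Finset.sum_le_sum_of_subset_of_nonneg hZ1sub (fun i _ _ => abs_nonneg _)
    linarith
  -- Bound for Z2
  have hb2 : (Z2.card : ℝ) * (a₁ / 2) ≤ D₂ := by
    rcases Z2.eq_empty_or_nonempty with h | ⟨i₀, hi₀⟩
    · rw [h]; simp; positivity
    · have hi₀K' : i₀ ∈ K' := (mem_filter.mp (mem_filter.mp hi₀).1).1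
      have hi₀small : ¬ a₁ / 2 ≤ |xh i₀| := (mem_filter.mp hi₀).2
      push_neg at hi₀small
      -- Z2 ⊆ K' \ K
      have hZ2sub : Z2 ⊆ K' \ K := by
        intro i hi
        rw [mem_sdiff]
        exact ⟨(mem_filter.mp (mem_filter.mp hi).1).1, hZnotK i (mem_filter.mp hi).1⟩
      have hcardeq : (K' \ K).card = (K \ K').card := by
        have h1 := Finset.card_sdiff_add_card_inter K' K
        have h2 := Finset.card_sdiff_add_card_inter K K'
        rw [Finset.inter_comm] at h2
        omega
      have hZ2le : Z2.card ≤ (K \ K').card := by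
        rw [← hcardeq]; exact Finset.card_le_card hZ2sub
      -- each j ∈ K \ K' contributes at least a₁/2
      have h1 : ((K \ K').card : ℝ) * (a₁ / 2) ≤ ∑ j ∈ K \ K', |x j - xh j| := by
        rw [show ((K \ K').card : ℝ) * (a₁ / 2) = ∑ _j ∈ K \ K', a₁ / 2 by
          rw [Finset.sum_const, nsmul_eq_mul]]
        apply Finset.sum_le_sum
        intro j hj
        rw [mem_sdiff] at hj
        have hxj : a₁ ≤ |x j| := hbig j hj.1
        have hxhj : |xh j| ≤ |xh i₀| := htop i₀ hi₀K' j hj.2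
        have := abs_sub_abs_le_abs_sub (x j) (xh j)
        linarith
      have h2 : ∑ j ∈ K \ K', |x j - xh j| ≤ ∑ j ∈ K, |x j - xh j| :=
        Finset.sum_le_sum_of_subset_of_nonneg (Finset.sdiff_subset) (fun i _ _ => abs_nonneg _)
      have h3 : (Z2.card : ℝ) ≤ ((K \ K').card : ℝ) := Nat.cast_le.mpr hZ2le
      nlinarith [ha₁.le]
  -- Combine
  have hsum : (Z.card : ℝ) * (a₁ / 2) ≤ D₁ + D₂ := by
    rw [← hcard]
    push_cast
    linarith
  rw [div_mul_eq_mul_div, le_div_iff₀ ha₁] at *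
  nlinarith
end

section
/- Under the weak robustness condition (for all w ∈ null(A): ||x_K + w_K||_1 + (1/C)||w_{K̄}||_1 ≥ ||x_K||_1) and the null-space bound ||w_K||_1 ≤ κ||w_{K̄}||_1 for all w ∈ null(A), and assuming |x_i| ≥ a₁ for all i ∈ K and |K| = k, let x̂ be an ℓ1 minimizer (Ax̂ = Ax, ||x̂||_1 ≤ ||x||_1) and K' the indices of the k largest entries of x̂ in absolute value. Then the number of indices in K' outside the support of x is at most (4C/((C-1)a₁))||x_{K̄}||_1 + (4Cκ/((C-1)a₁))||x_{K̄}||_1. -/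
/-!
Put `w = x̂ - x ∈ null(A)`. Robustness applied to `w`, together with `‖x̂‖₁ ≤ ‖x‖₁` and the
triangle inequality on `K̄`, gives `(1 - 1/C) ‖w_{K̄}‖₁ ≤ 2 ‖x_{K̄}‖₁`.
An index `i ∈ K'` with `x i = 0` lies in `K' \ K`, and `K' \ K` has as many elements as `K \ K'`;
so the bad indices can be matched with as many indices `j ∈ K \ K'`, where
`a₁ ≤ |x j| ≤ |x̂ j| + |w j|`. Since `K'` collects the largest entries of `x̂`, the `|x̂ j|` are
dominated by the `|x̂ i| = |w i|` at the bad indices, so `#bad · a₁ ≤ ‖w_{K̄}‖₁ + ‖w_K‖₁`,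
and the null-space bound `‖w_K‖₁ ≤ κ ‖w_{K̄}‖₁` finishes the estimate.
-/

open Finset

theorem sum_le_sum_of_card_eq_of_forall_le {ι M : Type*} [AddCommMonoid M] [LinearOrder M]
    [IsOrderedAddMonoid M] {s t : Finset ι} {g : ι → M} (hcard : #t = #s)
    (hle : ∀ i ∈ s, ∀ j ∈ t, g j ≤ g i) : ∑ j ∈ t, g j ≤ ∑ i ∈ s, g i := by
  rcases s.eq_empty_or_nonempty with rfl | hs
  · rw [card_empty, card_eq_zero] at hcard
    simp [hcard]
  calc ∑ j ∈ t, g j ≤ #t • s.inf' hs g :=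
        sum_le_card_nsmul _ _ _ fun j hj => le_inf' hs g fun i hi => hle i hi j hj
    _ = #s • s.inf' hs g := by rw [hcard]
    _ ≤ ∑ i ∈ s, g i := card_nsmul_le_sum _ _ _ fun i hi => inf'_le g hi

theorem sub_mul_sum_compl_abs_sub_le {ι : Type*} [Fintype ι] [DecidableEq ι] (K : Finset ι)
    {x y : ι → ℝ} {c : ℝ}
    (hrob : ∑ i ∈ K, |x i| ≤ ∑ i ∈ K, |y i| + c * ∑ i ∈ Kᶜ, |y i - x i|)
    (hl1 : ∑ i, |y i| ≤ ∑ i, |x i|) :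
    (1 - c) * ∑ i ∈ Kᶜ, |y i - x i| ≤ 2 * ∑ i ∈ Kᶜ, |x i| := by
  have hcompl : ∑ i ∈ Kᶜ, |y i| ≤ c * ∑ i ∈ Kᶜ, |y i - x i| + ∑ i ∈ Kᶜ, |x i| := by
    rw [← sum_add_sum_compl K, ← sum_add_sum_compl K] at hl1
    linarith
  have htri : ∑ i ∈ Kᶜ, |y i - x i| ≤ ∑ i ∈ Kᶜ, |y i| + ∑ i ∈ Kᶜ, |x i| := by
    rw [← sum_add_distrib]
    exact sum_le_sum fun i _ => abs_sub (y i) (x i)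
  linarith

theorem card_filter_eq_zero_mul_le {ι : Type*} [Fintype ι] [DecidableEq ι] {K K' : Finset ι}
    (hcard : #K' = #K) {x y : ι → ℝ} {a : ℝ} (ha : 0 < a) (hbig : ∀ i ∈ K, a ≤ |x i|)
    (htop : ∀ i ∈ K', ∀ j ∉ K', |y j| ≤ |y i|) :
    #(K'.filter (x · = 0)) * a ≤ ∑ i ∈ Kᶜ, |y i - x i| + ∑ i ∈ K, |y i - x i| := by
  set S := K'.filter (x · = 0)
  have hSK : S ⊆ K' \ K := fun i hi => by
    obtain ⟨hiK', hxi⟩ := mem_filter.mp hi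
    refine mem_sdiff.mpr ⟨hiK', fun hiK => ?_⟩
    have := hbig i hiK
    rw [hxi, abs_zero] at this
    exact ha.not_ge this
  have hSKc : S ⊆ Kᶜ := fun i hi => mem_compl.mpr (mem_sdiff.mp (hSK hi)).2
  obtain ⟨T, hTK, hTcard⟩ : ∃ T ⊆ K \ K', #T = #S := exists_subset_card_eq <|
    (card_le_card hSK).trans (card_sdiff_comm hcard).le
  have hTy : ∑ j ∈ T, |y j| ≤ ∑ i ∈ S, |y i| :=
    sum_le_sum_of_card_eq_of_forall_le hTcard fun i hi j hj =>
      htop i (mem_filter.mp hi).1 j (mem_sdiff.mp (hTK hj)).2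
  have hSy : ∑ i ∈ S, |y i| = ∑ i ∈ S, |y i - x i| :=
    sum_congr rfl fun i hi => by rw [(mem_filter.mp hi).2, sub_zero]
  calc (#S : ℝ) * a = ∑ j ∈ T, a := by rw [sum_const, hTcard, nsmul_eq_mul]
    _ ≤ ∑ j ∈ T, (|y j| + |y j - x j|) := sum_le_sum fun j hj => by
        have := hbig j (mem_sdiff.mp (hTK hj)).1
        have := abs_sub_abs_le_abs_sub (x j) (y j)
        rw [abs_sub_comm (x j)] at this
        linarith
    _ = ∑ j ∈ T, |y j| + ∑ j ∈ T, |y j - x j| := sum_add_distrib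
    _ ≤ ∑ i ∈ S, |y i - x i| + ∑ j ∈ K, |y j - x j| := by
        rw [← hSy]
        exact add_le_add hTy (sum_le_sum_of_subset_of_nonneg (hTK.trans sdiff_subset)
          fun _ _ _ => abs_nonneg _)
    _ ≤ ∑ i ∈ Kᶜ, |y i - x i| + ∑ i ∈ K, |y i - x i| := by
        gcongr

theorem stmt_8 {m n : ℕ} (A : Matrix (Fin m) (Fin n) ℝ) (x : Fin n → ℝ)
    (K : Finset (Fin n)) (k : ℕ) (C κ a₁ : ℝ) (hC : 1 < C) (hκ : 0 ≤ κ)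
    (ha₁ : 0 < a₁) (hK : K.card = k)
    (hns : ∀ w : Fin n → ℝ, A.mulVec w = 0 →
      ∑ i ∈ K, |x i + w i| + (1 / C) * ∑ i ∈ Kᶜ, |w i| ≥ ∑ i ∈ K, |x i|)
    (hker : ∀ w : Fin n → ℝ, A.mulVec w = 0 →
      ∑ i ∈ K, |w i| ≤ κ * ∑ i ∈ Kᶜ, |w i|)
    (hbig : ∀ i ∈ K, a₁ ≤ |x i|)
    (xh : Fin n → ℝ) (hAx : A.mulVec xh = A.mulVec x)
    (hl1 : ∑ i, |xh i| ≤ ∑ i, |x i|)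
    (K' : Finset (Fin n)) (hK' : K'.card = k)
    (htop : ∀ i ∈ K', ∀ j ∉ K', |xh j| ≤ |xh i|) :
    ((K'.filter (fun i => x i = 0)).card : ℝ) ≤
      (4 * C / ((C - 1) * a₁)) * ∑ i ∈ Kᶜ, |x i|
        + (4 * C * κ / ((C - 1) * a₁)) * ∑ i ∈ Kᶜ, |x i| := by
  have hAw : A.mulVec (xh - x) = 0 := by rw [Matrix.mulVec_sub, hAx, sub_self]
  have hrob := hns _ hAw
  have hWK := hker _ hAw
  simp only [Pi.sub_apply, add_sub_cancel] at hrob hWK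
  have hW := sub_mul_sum_compl_abs_sub_le K hrob hl1
  have hcount := card_filter_eq_zero_mul_le (hK'.trans hK.symm) ha₁ hbig htop
  set W := ∑ i ∈ Kᶜ, |xh i - x i|
  set X := ∑ i ∈ Kᶜ, |x i|
  have hX : 0 ≤ X := sum_nonneg fun _ _ => abs_nonneg _
  have hC1 : 0 < C - 1 := sub_pos.mpr hC
  have hCW : (C - 1) * W ≤ 2 * C * X := by
    calc (C - 1) * W = C * ((1 - 1 / C) * W) := by field_simp
      _ ≤ C * (2 * X) := by gcongr
      _ = 2 * C * X := by ring
  rw [← add_mul, ← add_div, div_mul_eq_mul_div, le_div_iff₀ (mul_pos hC1 ha₁)]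
  calc _ = (C - 1) * (#(K'.filter (x · = 0)) * a₁) := by ring
    _ ≤ (C - 1) * ((1 + κ) * W) := mul_le_mul_of_nonneg_left (by linarith) hC1.le
    _ = (1 + κ) * ((C - 1) * W) := by ring
    _ ≤ (1 + κ) * (2 * C * X) := by gcongr
    _ ≤ (4 * C + 4 * C * κ) * X := by nlinarith [mul_nonneg hκ hX]
end

section
/- Under the hypotheses of the support-estimation theorem (weak robustness with constants C > 1 and κ, |x_i| ≥ a₁ on K, |K| = k, ||x_{K̄}||_1 ≤ Δ, K' the top-k set of the ℓ1 minimizer x̂), there are at least k − 4C(κ+1)Δ/((C−1)a₁) nonzero entries of x with index in K'. -/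
open Finset

theorem stmt_9 {m n : ℕ} (A : Matrix (Fin m) (Fin n) ℝ) (x : Fin n → ℝ)
    (K : Finset (Fin n)) (k : ℕ) (C κ a₁ Δ : ℝ) (hC : 1 < C) (hκ : 0 ≤ κ)
    (ha₁ : 0 < a₁) (hK : K.card = k)
    (hns : ∀ w : Fin n → ℝ, A.mulVec w = 0 →
      ∑ i ∈ K, |x i + w i| + (1 / C) * ∑ i ∈ Kᶜ, |w i| ≥ ∑ i ∈ K, |x i|)
    (hker : ∀ w : Fin n → ℝ, A.mulVec w = 0 →
      ∑ i ∈ K, |w i| ≤ κ * ∑ i ∈ Kᶜ, |w i|)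
    (hbig : ∀ i ∈ K, a₁ ≤ |x i|)
    (hΔ : ∑ i ∈ Kᶜ, |x i| ≤ Δ)
    (xh : Fin n → ℝ) (hAx : A.mulVec xh = A.mulVec x)
    (hl1 : ∑ i, |xh i| ≤ ∑ i, |x i|)
    (K' : Finset (Fin n)) (hK' : K'.card = k)
    (htop : ∀ i ∈ K', ∀ j ∉ K', |xh j| ≤ |xh i|) :
    (k : ℝ) - 4 * C * (κ + 1) * Δ / ((C - 1) * a₁) ≤
      ((K'.filter (fun i => x i ≠ 0)).card : ℝ) := by
  set w : Fin n → ℝ := fun i => xh i - x i with hw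
  have hAw : A.mulVec w = 0 := by
    have : A.mulVec w = A.mulVec xh - A.mulVec x := by
      rw [hw]
      have : (fun i => xh i - x i) = xh - x := rfl
      rw [this, Matrix.mulVec_sub]
    rw [this, hAx, sub_self]
  have hΔ0 : 0 ≤ Δ := le_trans (Finset.sum_nonneg fun i _ => abs_nonneg _) hΔ
  have hC0 : (0:ℝ) < C := lt_trans one_pos hC
  have hC1 : (0:ℝ) < C - 1 := by linarith
  set W := ∑ i ∈ Kᶜ, |w i| with hWdef
  have hW0 : 0 ≤ W := Finset.sum_nonneg fun i _ => abs_nonneg _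
  have hxw : ∀ i, x i + w i = xh i := fun i => by simp [hw]
  have h1 : ∑ i ∈ K, |xh i| + (1 / C) * W ≥ ∑ i ∈ K, |x i| := by
    have := hns w hAw
    simpa [hxw] using this
  have hsplit1 : ∑ i ∈ K, |xh i| + ∑ i ∈ Kᶜ, |xh i| = ∑ i, |xh i| :=
    Finset.sum_add_sum_compl K _
  have hsplit2 : ∑ i ∈ K, |x i| + ∑ i ∈ Kᶜ, |x i| = ∑ i, |x i| :=
    Finset.sum_add_sum_compl K _
  have h2 : W - ∑ i ∈ Kᶜ, |x i| ≤ ∑ i ∈ Kᶜ, |xh i| := by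
    have : ∑ i ∈ Kᶜ, (|w i| - |x i|) ≤ ∑ i ∈ Kᶜ, |xh i| := by
      apply Finset.sum_le_sum
      intro i _
      have h := abs_sub (xh i) (x i)
      simp only [hw]
      linarith
    rw [Finset.sum_sub_distrib] at this
    linarith
  -- W * (C - 1) ≤ 2 * C * Δ
  have hWC : W - 2 * Δ ≤ (1 / C) * W := by linarith
  have hWb : W * (C - 1) ≤ 2 * C * Δ := by
    have := mul_le_mul_of_nonneg_right hWC hC0.le
    have hc : (1 / C) * W * C = W := by field_simp
    nlinarith
  have hKw : ∑ i ∈ K, |w i| ≤ κ * W := hker w hAw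
  -- combinatorial part
  set t := (K \ K').card with ht
  have hcardKK' : K.card = K'.card := by rw [hK, hK']
  have hcard' : (K' \ K).card = t := (Finset.card_sdiff_comm hcardKK').symm
  have htk : t ≤ k := by
    rw [← hK]; exact Finset.card_le_card (Finset.sdiff_subset)
  -- lower bound on filtered card
  have hScard : k - t ≤ (K'.filter (fun i => x i ≠ 0)).card := by
    have hsub : K ∩ K' ⊆ K'.filter (fun i => x i ≠ 0) := by
      intro i hi
      rw [Finset.mem_inter] at hi
      rw [Finset.mem_filter]
      refine ⟨hi.2, ?_⟩
      have := hbig i hi.1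
      intro h0
      rw [h0] at this
      simp at this
      linarith
    have h3 : (K \ K').card + (K ∩ K').card = K.card :=
      Finset.card_sdiff_add_card_inter K K'
    have : (K ∩ K').card = k - t := by omega
    calc k - t = (K ∩ K').card := this.symm
      _ ≤ _ := Finset.card_le_card hsub
  -- main bound : t * a₁ ≤ sum |w| over K\K' + (Δ + W)
  have tbound : (t : ℝ) * a₁ ≤ ∑ i ∈ K \ K', |w i| + (Δ + W) := by
    rcases Nat.eq_zero_or_pos t with h0 | hpos
    · rw [h0]
      push_cast
      have : 0 ≤ ∑ i ∈ K \ K', |w i| := Finset.sum_nonneg fun i _ => abs_nonneg _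
      nlinarith
    · have hne : (K' \ K).Nonempty := Finset.card_pos.mp (by omega)
      obtain ⟨i₀, hi₀, hmin⟩ := Finset.exists_min_image (K' \ K) (fun i => |xh i|) hne
      have step1 : ∑ i ∈ K \ K', (a₁ - |w i|) ≤ ∑ i ∈ K \ K', |xh i| := by
        apply Finset.sum_le_sum
        intro j hj
        rw [Finset.mem_sdiff] at hj
        have hb := hbig j hj.1
        have h := abs_sub (xh j) (w j)
        have hx : xh j - w j = x j := by simp [hw]
        rw [hx] at h
        linarith [abs_nonneg (w j)]
      have step2 : ∑ i ∈ K \ K', |xh i| ≤ (t : ℝ) * |xh i₀| := by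
        calc ∑ i ∈ K \ K', |xh i| ≤ ∑ _i ∈ K \ K', |xh i₀| := by
              apply Finset.sum_le_sum
              intro j hj
              rw [Finset.mem_sdiff] at hj
              exact htop i₀ (Finset.mem_sdiff.mp hi₀).1 j hj.2
          _ = (t : ℝ) * |xh i₀| := by rw [Finset.sum_const, ht]; push_cast; ring
      have step3 : (t : ℝ) * |xh i₀| ≤ ∑ i ∈ K' \ K, |xh i| := by
        have := Finset.card_nsmul_le_sum (K' \ K) (fun i => |xh i|) (|xh i₀|)
          (fun i hi => hmin i hi)
        rw [hcard'] at this
        simpa [nsmul_eq_mul] using this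
      have step4 : ∑ i ∈ K' \ K, |xh i| ≤ Δ + W := by
        have hh : ∑ i ∈ K' \ K, |xh i| ≤ ∑ i ∈ K' \ K, (|x i| + |w i|) := by
          apply Finset.sum_le_sum
          intro i _
          have := abs_add_le (x i) (w i)
          rw [hxw] at this
          exact this
        have hsubc : K' \ K ⊆ Kᶜ := by
          intro i hi
          rw [Finset.mem_compl]
          exact (Finset.mem_sdiff.mp hi).2
        have hx' : ∑ i ∈ K' \ K, |x i| ≤ ∑ i ∈ Kᶜ, |x i| :=
          Finset.sum_le_sum_of_subset_of_nonneg hsubc (fun i _ _ => abs_nonneg _)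
        have hw' : ∑ i ∈ K' \ K, |w i| ≤ W :=
          Finset.sum_le_sum_of_subset_of_nonneg hsubc (fun i _ _ => abs_nonneg _)
        rw [Finset.sum_add_distrib] at hh
        linarith
      have hsw : ∑ i ∈ K \ K', (a₁ - |w i|) =
          (t : ℝ) * a₁ - ∑ i ∈ K \ K', |w i| := by
        rw [Finset.sum_sub_distrib, Finset.sum_const, ht]
        push_cast
        ring
      rw [hsw] at step1
      linarith
  have hwsub : ∑ i ∈ K \ K', |w i| ≤ κ * W := by
    have : ∑ i ∈ K \ K', |w i| ≤ ∑ i ∈ K, |w i| :=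
      Finset.sum_le_sum_of_subset_of_nonneg (Finset.sdiff_subset)
        (fun i _ _ => abs_nonneg _)
    linarith
  -- conclude: t ≤ 4C(κ+1)Δ/((C-1)a₁)
  have htD : (t : ℝ) ≤ 4 * C * (κ + 1) * Δ / ((C - 1) * a₁) := by
    rw [le_div_iff₀ (by positivity)]
    have h4 : (t : ℝ) * a₁ ≤ (κ + 1) * W + Δ := by linarith
    have h5 : ((t : ℝ) * a₁) * (C - 1) ≤ ((κ + 1) * W + Δ) * (C - 1) :=
      mul_le_mul_of_nonneg_right h4 hC1.le
    have h6 : (κ + 1) * (W * (C - 1)) ≤ (κ + 1) * (2 * C * Δ) :=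
      mul_le_mul_of_nonneg_left hWb (by linarith)
    nlinarith [mul_nonneg hΔ0 hκ, mul_nonneg hΔ0 hC0.le, mul_nonneg (mul_nonneg hΔ0 hκ) hC0.le]
  have hSreal : (k : ℝ) - t ≤ ((K'.filter (fun i => x i ≠ 0)).card : ℝ) := by
    have := hScard
    have : ((k - t : ℕ) : ℝ) ≤ ((K'.filter (fun i => x i ≠ 0)).card : ℝ) := by
      exact_mod_cast hScard
    rw [Nat.cast_sub htk] at this
    exact this
  linarith
end
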